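/- Vanishing steps and gradients of gradient descent: let E be a real inner product space, f : E → ℝ differentiable with K-Lipschitz gradient (K > 0) and bounded below. Fix a step size η with 0 < η ≤ 1/K and define the iterates x₀ ∈ E, x_{t+1} = x_t − η·∇f(x_t). Then the successive differences converge to zero, x_{t+1} − x_t → 0 as t → ∞, and the gradients converge to zero, ∇f(x_t) → 0 as t → ∞. -/

import Mathlib

/-!
By the descent lemma, `f (x - η ∇f x) ≤ f x - (η / 2) ‖∇f x‖²` as soon as `K η ≤ 1`. Hence
`f (x t)` is decreasing and, being bounded below, convergent; its decrements tend to `0` and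
dominate `(η / 2) ‖∇f (x t)‖²`, so `∇f (x t) → 0`, and `x (t + 1) - x t = -η ∇f (x t) → 0`.
-/

open Filter Set Topology

local notation "⟪" x ", " y "⟫" => @inner ℝ _ _ x y

section Smooth

variable {E : Type*} [NormedAddCommGroup E] [InnerProductSpace ℝ E] [CompleteSpace E]
  {f : E → ℝ} {K : ℝ}

lemma hasDerivAt_comp_add_smul (hf : Differentiable ℝ f) (x v : E) (t : ℝ) :
    HasDerivAt (fun s : ℝ => f (x + s • v)) ⟪gradient f (x + t • v), v⟫ t := by
  have hline : HasDerivAt (fun s : ℝ => x + s • v) v t := by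
    simpa using ((hasDerivAt_id t).smul_const v).const_add x
  have hgrad := (hf (x + t • v)).hasGradientAt
  rw [hasGradientAt_iff_hasFDerivAt] at hgrad
  exact (hgrad.comp_hasDerivAt t hline).congr_deriv (by simp)

lemma inner_gradient_add_smul_le
    (hlip : ∀ x y : E, ‖gradient f x - gradient f y‖ ≤ K * ‖x - y‖)
    (x v : E) {t : ℝ} (ht : 0 ≤ t) :
    ⟪gradient f (x + t • v), v⟫ ≤ ⟪gradient f x, v⟫ + K * t * ‖v‖ ^ 2 := by
  have hdiff : ⟪gradient f (x + t • v) - gradient f x, v⟫ ≤ K * t * ‖v‖ ^ 2 :=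
    calc ⟪gradient f (x + t • v) - gradient f x, v⟫
        ≤ ‖gradient f (x + t • v) - gradient f x‖ * ‖v‖ := real_inner_le_norm _ _
      _ ≤ K * ‖(x + t • v) - x‖ * ‖v‖ := by gcongr; exact hlip _ _
      _ = K * t * ‖v‖ ^ 2 := by
          rw [add_sub_cancel_left, norm_smul, Real.norm_of_nonneg ht]; ring
  rw [inner_sub_left] at hdiff
  linarith

lemma le_add_inner_gradient_add_sq
    (hf : Differentiable ℝ f)
    (hlip : ∀ x y : E, ‖gradient f x - gradient f y‖ ≤ K * ‖x - y‖) (x v : E) :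
    f (x + v) ≤ f x + ⟪gradient f x, v⟫ + K / 2 * ‖v‖ ^ 2 := by
  have hφ := hasDerivAt_comp_add_smul hf x v
  have hB : ∀ t : ℝ, HasDerivAt (fun s => f x + s * ⟪gradient f x, v⟫ + K / 2 * s ^ 2 * ‖v‖ ^ 2)
      (⟪gradient f x, v⟫ + K * t * ‖v‖ ^ 2) t := by
    intro t
    have := (((hasDerivAt_id t).mul_const ⟪gradient f x, v⟫).const_add (f x)).add
      (((hasDerivAt_pow 2 t).const_mul (K / 2)).mul_const (‖v‖ ^ 2))
    exact this.congr_deriv (by push_cast; ring)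
  have key := image_le_of_deriv_right_le_deriv_boundary (a := 0) (b := 1)
    (fun t _ => (hφ t).continuousAt.continuousWithinAt) (fun t _ => (hφ t).hasDerivWithinAt)
    (by simp) (fun t _ => (hB t).continuousAt.continuousWithinAt)
    (fun t _ => (hB t).hasDerivWithinAt)
    (fun t ht => inner_gradient_add_smul_le hlip x v ht.1) (right_mem_Icc.2 zero_le_one)
  simpa using key

end Smooth

lemma Antitone.tendsto_sub_succ_nhds_zero {a : ℕ → ℝ} (ha : Antitone a)
    (hbdd : BddBelow (range a)) :
    Tendsto (fun n => a n - a (n + 1)) atTop (𝓝 0) := by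
  have hlim := tendsto_atTop_ciInf ha hbdd
  simpa using hlim.sub (hlim.comp (tendsto_add_atTop_nat 1))

lemma tendsto_nhds_zero_of_norm_sq_le {α F : Type*} [SeminormedAddCommGroup F] {l : Filter α}
    {u : α → F} {d : α → ℝ} (c : ℝ) (hd : Tendsto d l (𝓝 0)) (hud : ∀ n, ‖u n‖ ^ 2 ≤ c * d n) :
    Tendsto u l (𝓝 0) := by
  have hsqrt : Tendsto (fun n => √(c * d n)) l (𝓝 0) := by
    simpa using (hd.const_mul c).sqrt
  refine tendsto_zero_iff_norm_tendsto_zero.2 <|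
    squeeze_zero (fun _ => norm_nonneg _) (fun n => ?_) hsqrt
  exact Real.le_sqrt_of_sq_le (hud n)

section GradientDescent

variable {E : Type*} [NormedAddCommGroup E] [InnerProductSpace ℝ E] [CompleteSpace E]
  {f : E → ℝ} {K η : ℝ}

lemma apply_sub_smul_gradient_le (hf : Differentiable ℝ f)
    (hlip : ∀ x y : E, ‖gradient f x - gradient f y‖ ≤ K * ‖x - y‖)
    (hη : 0 ≤ η) (hKη : K * η ≤ 1) (x : E) :
    f (x - η • gradient f x) ≤ f x - η / 2 * ‖gradient f x‖ ^ 2 := by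
  have hquad := le_add_inner_gradient_add_sq hf hlip x (-(η • gradient f x))
  rw [← sub_eq_add_neg, inner_neg_right, real_inner_smul_right, real_inner_self_eq_norm_sq,
    norm_neg, norm_smul, Real.norm_of_nonneg hη] at hquad
  have hslack : 0 ≤ η / 2 * ‖gradient f x‖ ^ 2 * (1 - K * η) := by
    have := sub_nonneg.2 hKη
    positivity
  nlinarith

end GradientDescent

theorem stmt_10_general {E : Type*} [NormedAddCommGroup E] [InnerProductSpace ℝ E]
    [CompleteSpace E]
    (f : E → ℝ) (K : ℝ)
    (hf : Differentiable ℝ f)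
    (hlip : ∀ x y : E, ‖gradient f x - gradient f y‖ ≤ K * ‖x - y‖)
    (hbdd : ∃ c : ℝ, ∀ y : E, c ≤ f y)
    (η : ℝ) (hη : 0 < η) (hηK : η ≤ 1 / K)
    (x : ℕ → E) (hx : ∀ t, x (t + 1) = x t - η • gradient f (x t)) :
    Tendsto (fun t => x (t + 1) - x t) atTop (nhds 0) ∧
    Tendsto (fun t => gradient f (x t)) atTop (nhds 0) := by
  have hK : 0 < K := one_div_pos.1 (hη.trans_le hηK)
  have hKη : K * η ≤ 1 := by rwa [le_div_iff₀ hK, mul_comm] at hηK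
  have hdesc : ∀ t, η / 2 * ‖gradient f (x t)‖ ^ 2 ≤ f (x t) - f (x (t + 1)) := fun t => by
    have hstep := apply_sub_smul_gradient_le hf hlip hη.le hKη (x t)
    rw [← hx t] at hstep
    linarith
  have hanti : Antitone fun t => f (x t) :=
    antitone_nat_of_succ_le fun t => sub_nonneg.1 (le_trans (by positivity) (hdesc t))
  obtain ⟨c, hc⟩ := hbdd
  have hdiff := hanti.tendsto_sub_succ_nhds_zero ⟨c, by rintro _ ⟨t, rfl⟩; exact hc _⟩
  have hgrad : Tendsto (fun t => gradient f (x t)) atTop (𝓝 0) :=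
    tendsto_nhds_zero_of_norm_sq_le (2 / η) hdiff fun t => by
      rw [div_mul_eq_mul_div, le_div_iff₀ hη]
      linarith [hdesc t]
  refine ⟨?_, hgrad⟩
  simpa [hx] using (hgrad.const_smul η).neg

/-- Vanishing steps and gradients of gradient descent: with step size
`0 < η ≤ 1/K` and iterates `x_{t+1} = x_t − η·∇f(x_t)` for a bounded-below
`K`-smooth `f`, both `x_{t+1} − x_t → 0` and `∇f(x_t) → 0`. -/
theorem stmt_10 {E : Type*} [NormedAddCommGroup E] [InnerProductSpace ℝ E]
    [CompleteSpace E]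
    (f : E → ℝ) (K : ℝ) (hK : 0 < K)
    (hf : Differentiable ℝ f)
    (hlip : ∀ x y : E, ‖gradient f x - gradient f y‖ ≤ K * ‖x - y‖)
    (hbdd : ∃ c : ℝ, ∀ y : E, c ≤ f y)
    (η : ℝ) (hη : 0 < η) (hηK : η ≤ 1 / K)
    (x : ℕ → E) (hx : ∀ t, x (t + 1) = x t - η • gradient f (x t)) :
    Tendsto (fun t => x (t + 1) - x t) atTop (nhds 0) ∧
    Tendsto (fun t => gradient f (x t)) atTop (nhds 0) :=
  stmt_10_general f K hf hlip hbdd η hη hηK x hx
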